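/- arXiv:2007.14176 — 6 statements merged into one kernel-verified Lean document; each statement's English description precedes it below -/
import Mathlib

section
/- Let G be a Cameron–Walker graph as in the standard form. Then the independence number of G equals (s_1+...+s_m) + (t_1+...+t_p) + #{j : t_j = 0}. -/
/-- A finite set of vertices is independent in `G` if no two of its members are adjacent. -/
def SimpleGraph.IsIndepFinset {V : Type*} (G : SimpleGraph V) (A : Finset V) : Prop :=
  ∀ u ∈ A, ∀ v ∈ A, ¬ G.Adj u v

/-- `A` is an independent dominating set of `G`: `A` is independent and
`A ∪ N_G(A) = V(G)`, i.e. every vertex is in `A` or adjacent to a member of `A`. -/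
def SimpleGraph.IsIndepDomFinset {V : Type*} (G : SimpleGraph V) (A : Finset V) : Prop :=
  G.IsIndepFinset A ∧ ∀ v : V, v ∈ A ∨ ∃ u ∈ A, G.Adj u v

/-- The vertex set of a Cameron–Walker graph in standard form:
the `vᵢ` (`i : Fin m`), the `w_j` (`j : Fin p`), the `sᵢ` leaves attached to `vᵢ`,
and the two extra vertices of each of the `t_j` pendant triangles attached to `w_j`. -/
abbrev CWVert (m p : ℕ) (s : Fin m → ℕ) (t : Fin p → ℕ) : Type :=
  (Fin m) ⊕ (Fin p) ⊕ (Σ i : Fin m, Fin (s i)) ⊕ (Σ j : Fin p, Fin (t j) × Fin 2)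

/-- The Cameron–Walker graph in standard form: a bipartite graph between the `vᵢ`
and the `w_j` with edge relation `E`, together with `sᵢ` pendant leaves at each `vᵢ`
and `t_j` pendant triangles at each `w_j`. -/
def CWGraph (m p : ℕ) (E : Fin m → Fin p → Prop) (s : Fin m → ℕ) (t : Fin p → ℕ) :
    SimpleGraph (CWVert m p s t) :=
  SimpleGraph.fromRel (fun u v =>
    match u, v with
    | Sum.inl i, Sum.inr (Sum.inl j) => E i j
    | Sum.inl i, Sum.inr (Sum.inr (Sum.inl ⟨i', _⟩)) => i = i'
    | Sum.inr (Sum.inl j), Sum.inr (Sum.inr (Sum.inr ⟨j', _⟩)) => j = j'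
    | Sum.inr (Sum.inr (Sum.inr ⟨j, l, _⟩)), Sum.inr (Sum.inr (Sum.inr ⟨j', l', _⟩)) =>
        j = j' ∧ HEq l l'
    | _, _ => False)

/-- The bipartite part of the Cameron–Walker graph, as a graph on `{v₁,…,vₘ} ∪ {w₁,…,w_p}`. -/
def CWBip (m p : ℕ) (E : Fin m → Fin p → Prop) : SimpleGraph ((Fin m) ⊕ (Fin p)) :=
  SimpleGraph.fromRel (fun u v =>
    match u, v with
    | Sum.inl i, Sum.inr j => E i j
    | _, _ => False)

namespace CWAux

variable {m p : ℕ} {E : Fin m → Fin p → Prop} {s : Fin m → ℕ} {t : Fin p → ℕ}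

/-- block index -/
def blk : CWVert m p s t → Fin m ⊕ Fin p
  | Sum.inl i => Sum.inl i
  | Sum.inr (Sum.inl j) => Sum.inr j
  | Sum.inr (Sum.inr (Sum.inl x)) => Sum.inl x.1
  | Sum.inr (Sum.inr (Sum.inr x)) => Sum.inr x.1

/-- index within block -/
def idx : CWVert m p s t → ℕ
  | Sum.inr (Sum.inr (Sum.inl x)) => (x.2 : ℕ)
  | Sum.inr (Sum.inr (Sum.inr x)) => (x.2.1 : ℕ)
  | _ => 0

lemma fiber_l (A : Finset (CWVert m p s t))
    (hA : (CWGraph m p E s t).IsIndepFinset A) (i : Fin m) (hsi : 1 ≤ s i) :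
    (A.filter (fun x => blk x = Sum.inl i)).card ≤ s i := by
  set B := A.filter (fun x => blk x = Sum.inl i) with hB
  have hmem : ∀ x ∈ B, x = Sum.inl i ∨ ∃ k : Fin (s i), x = Sum.inr (Sum.inr (Sum.inl ⟨i, k⟩)) := by
    intro x hx
    rw [hB, Finset.mem_filter] at hx
    obtain (i' | j' | ⟨i', k⟩ | ⟨j', l, b⟩) := x <;> simp only [blk] at hx
    · obtain ⟨-, h⟩ := hx; rw [Sum.inl.injEq] at h; subst h; exact Or.inl rfl
    · exact absurd hx.2 (by simp)
    · obtain ⟨-, h⟩ := hx; rw [Sum.inl.injEq] at h; subst h; exact Or.inr ⟨k, rfl⟩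
    · exact absurd hx.2 (by simp)
  by_cases hv : (Sum.inl i : CWVert m p s t) ∈ A
  · have hsub : B ⊆ {Sum.inl i} := by
      intro x hx
      rcases hmem x hx with rfl | ⟨k, rfl⟩
      · simp
      · exfalso
        exact hA _ hv _ (Finset.mem_filter.mp hx).1
          (by simp [CWGraph, SimpleGraph.fromRel_adj])
    have h1 : B.card ≤ 1 := by simpa using Finset.card_le_card hsub
    omega
  · have h1 : B.card ≤ (Finset.range (s i)).card := by
      apply Finset.card_le_card_of_injOn idx
      · intro x hx
        rcases hmem x hx with rfl | ⟨k, rfl⟩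
        · exact absurd (Finset.mem_filter.mp hx).1 hv
        · simpa [idx] using k.isLt
      · intro x hx y hy hxy
        rcases hmem x hx with rfl | ⟨k, rfl⟩
        · exact absurd (Finset.mem_filter.mp hx).1 hv
        rcases hmem y hy with rfl | ⟨k', rfl⟩
        · exact absurd (Finset.mem_filter.mp hy).1 hv
        simp only [idx] at hxy
        have : k = k' := Fin.ext hxy
        subst this; rfl
    simpa using h1

lemma fiber_r (A : Finset (CWVert m p s t))
    (hA : (CWGraph m p E s t).IsIndepFinset A) (j : Fin p) :
    (A.filter (fun x => blk x = Sum.inr j)).card ≤ t j + (if t j = 0 then 1 else 0) := by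
  set B := A.filter (fun x => blk x = Sum.inr j) with hB
  have hmem : ∀ x ∈ B, x = Sum.inr (Sum.inl j) ∨
      ∃ l : Fin (t j), ∃ b : Fin 2, x = Sum.inr (Sum.inr (Sum.inr ⟨j, l, b⟩)) := by
    intro x hx
    rw [hB, Finset.mem_filter] at hx
    obtain (i' | j' | ⟨i', k⟩ | ⟨j', l, b⟩) := x <;> simp only [blk] at hx
    · exact absurd hx.2 (by simp)
    · obtain ⟨-, h⟩ := hx; rw [Sum.inr.injEq] at h; subst h; exact Or.inl rfl
    · exact absurd hx.2 (by simp)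
    · obtain ⟨-, h⟩ := hx; rw [Sum.inr.injEq] at h; subst h; exact Or.inr ⟨l, b, rfl⟩
  by_cases hv : (Sum.inr (Sum.inl j) : CWVert m p s t) ∈ A
  · have hsub : B ⊆ {Sum.inr (Sum.inl j)} := by
      intro x hx
      rcases hmem x hx with rfl | ⟨l, b, rfl⟩
      · simp
      · exfalso
        exact hA _ hv _ (Finset.mem_filter.mp hx).1
          (by simp [CWGraph, SimpleGraph.fromRel_adj])
    have h1 : B.card ≤ 1 := by simpa using Finset.card_le_card hsub
    have hl : (Sum.inr (Sum.inl j) : CWVert m p s t) ∈ B ∨ B ⊆ ∅ := by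
      by_cases h : (Sum.inr (Sum.inl j) : CWVert m p s t) ∈ B
      · exact Or.inl h
      · right; intro x hx
        rcases hmem x hx with rfl | ⟨l, b, rfl⟩
        · exact absurd hx h
        · exfalso
          exact hA _ hv _ (Finset.mem_filter.mp hx).1
            (by simp [CWGraph, SimpleGraph.fromRel_adj])
    split_ifs with h
    · omega
    · -- t j ≥ 1
      omega
  · have hnotw : ∀ x ∈ B, ∃ l : Fin (t j), ∃ b : Fin 2,
        x = Sum.inr (Sum.inr (Sum.inr ⟨j, l, b⟩)) := by
      intro x hx
      rcases hmem x hx with rfl | h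
      · exact absurd (Finset.mem_filter.mp hx).1 hv
      · exact h
    have hcard : B.card ≤ (Finset.range (t j)).card := by
      apply Finset.card_le_card_of_injOn idx
      · intro x hx
        obtain ⟨l, b, rfl⟩ := hnotw x hx
        simpa [idx] using l.isLt
      · intro x hx y hy hxy
        obtain ⟨l, b, rfl⟩ := hnotw x hx
        obtain ⟨l', b', rfl⟩ := hnotw y hy
        simp only [idx] at hxy
        have hl : l = l' := Fin.ext hxy
        subst hl
        have hb : b = b' := by
          by_contra hbb
          exact hA _ (Finset.mem_filter.mp hx).1 _ (Finset.mem_filter.mp hy).1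
            (by simp [CWGraph, SimpleGraph.fromRel_adj, Sigma.ext_iff, Prod.ext_iff, hbb])
        subst hb; rfl
    rw [Finset.card_range] at hcard
    split_ifs <;> omega

lemma upper (A : Finset (CWVert m p s t))
    (hA : (CWGraph m p E s t).IsIndepFinset A) (hs : ∀ i, 1 ≤ s i) :
    A.card ≤ (∑ i, s i) + (∑ j, t j) +
      (Finset.univ.filter (fun j : Fin p => t j = 0)).card := by
  rw [Finset.card_eq_sum_card_fiberwise (f := blk) (t := Finset.univ) (fun x _ => Finset.mem_univ _)]
  rw [Fintype.sum_sum_type]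
  have h1 : ∑ i, (A.filter (fun x => blk x = Sum.inl i)).card ≤ ∑ i, s i :=
    Finset.sum_le_sum fun i _ => fiber_l A hA i (hs i)
  have h2 : ∑ j, (A.filter (fun x => blk x = Sum.inr j)).card ≤
      ∑ j, (t j + (if t j = 0 then 1 else 0)) :=
    Finset.sum_le_sum fun j _ => fiber_r A hA j
  have h3 : ∑ j, (t j + (if t j = 0 then 1 else 0)) =
      (∑ j, t j) + (Finset.univ.filter (fun j : Fin p => t j = 0)).card := by
    rw [Finset.sum_add_distrib, Finset.card_filter]
  omega

/-- the witness independent set -/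
def W (m p : ℕ) (s : Fin m → ℕ) (t : Fin p → ℕ) : Finset (CWVert m p s t) :=
  (Finset.univ.image fun x : Σ i, Fin (s i) => (Sum.inr (Sum.inr (Sum.inl x)) : CWVert m p s t)) ∪
  (Finset.univ.image fun x : Σ j, Fin (t j) =>
    (Sum.inr (Sum.inr (Sum.inr ⟨x.1, x.2, 0⟩)) : CWVert m p s t)) ∪
  ((Finset.univ.filter fun j => t j = 0).image fun j =>
    (Sum.inr (Sum.inl j) : CWVert m p s t))

lemma mem_W {x : CWVert m p s t} : x ∈ W m p s t ↔
    (∃ y : Σ i, Fin (s i), x = Sum.inr (Sum.inr (Sum.inl y))) ∨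
    (∃ y : Σ j, Fin (t j), x = Sum.inr (Sum.inr (Sum.inr ⟨y.1, y.2, 0⟩))) ∨
    (∃ j : Fin p, t j = 0 ∧ x = Sum.inr (Sum.inl j)) := by
  simp [W, Finset.mem_union, Finset.mem_image, eq_comm, and_comm]

lemma W_indep : (CWGraph m p E s t).IsIndepFinset (W m p s t) := by
  intro u hu v hv hadj
  rw [mem_W] at hu hv
  rcases hu with ⟨y, rfl⟩ | ⟨y, rfl⟩ | ⟨j, hj, rfl⟩ <;>
    rcases hv with ⟨z, rfl⟩ | ⟨z, rfl⟩ | ⟨j', hj', rfl⟩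
  · simp [CWGraph, SimpleGraph.fromRel_adj] at hadj
  · simp [CWGraph, SimpleGraph.fromRel_adj] at hadj
  · simp [CWGraph, SimpleGraph.fromRel_adj] at hadj
  · simp [CWGraph, SimpleGraph.fromRel_adj] at hadj
  · -- tri-tri
    rw [CWGraph, SimpleGraph.fromRel_adj] at hadj
    obtain ⟨y1, y2⟩ := y; obtain ⟨z1, z2⟩ := z
    rcases hadj with ⟨hne, ⟨h1, h2⟩ | ⟨h1, h2⟩⟩ <;>
      (dsimp at h1 h2 hne; subst h1; rw [heq_iff_eq] at h2; subst h2; exact hne rfl)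
  · -- tri - w
    rw [CWGraph, SimpleGraph.fromRel_adj] at hadj
    obtain ⟨hne, h | h⟩ := hadj
    · exact h.elim
    · dsimp at h; subst h; exact absurd y.2.isLt (by omega)
  · simp [CWGraph, SimpleGraph.fromRel_adj] at hadj
  · -- w - tri
    rw [CWGraph, SimpleGraph.fromRel_adj] at hadj
    obtain ⟨hne, h | h⟩ := hadj
    · dsimp at h; subst h; exact absurd z.2.isLt (by omega)
    · exact h.elim
  · simp [CWGraph, SimpleGraph.fromRel_adj] at hadj

lemma W_card : (W m p s t).card = (∑ i, s i) + (∑ j, t j) +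
    (Finset.univ.filter (fun j : Fin p => t j = 0)).card := by
  classical
  have hinj1 : Function.Injective
      (fun x : Σ i, Fin (s i) => (Sum.inr (Sum.inr (Sum.inl x)) : CWVert m p s t)) := by
    intro a b h; simpa using h
  have hinj2 : Function.Injective
      (fun x : Σ j, Fin (t j) =>
        (Sum.inr (Sum.inr (Sum.inr ⟨x.1, x.2, 0⟩)) : CWVert m p s t)) := by
    intro a b h
    obtain ⟨a1, a2⟩ := a; obtain ⟨b1, b2⟩ := b
    simp only [Sum.inr.injEq, Sigma.mk.inj_iff] at h
    obtain ⟨h1, h2⟩ := h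
    subst h1
    rw [heq_iff_eq, Prod.mk.injEq] at h2
    rw [h2.1]
  have hinj3 : Function.Injective
      (fun j : Fin p => (Sum.inr (Sum.inl j) : CWVert m p s t)) := by
    intro a b h; simpa using h
  have d1 : Disjoint
      (Finset.univ.image fun x : Σ i, Fin (s i) =>
        (Sum.inr (Sum.inr (Sum.inl x)) : CWVert m p s t))
      (Finset.univ.image fun x : Σ j, Fin (t j) =>
        (Sum.inr (Sum.inr (Sum.inr ⟨x.1, x.2, 0⟩)) : CWVert m p s t)) := by
    rw [Finset.disjoint_left]
    rintro x hx hy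
    simp only [Finset.mem_image, Finset.mem_univ, true_and] at hx hy
    obtain ⟨y, rfl⟩ := hx
    obtain ⟨z, hz⟩ := hy
    simp at hz
  have d2 : Disjoint
      ((Finset.univ.image fun x : Σ i, Fin (s i) =>
        (Sum.inr (Sum.inr (Sum.inl x)) : CWVert m p s t)) ∪
       (Finset.univ.image fun x : Σ j, Fin (t j) =>
        (Sum.inr (Sum.inr (Sum.inr ⟨x.1, x.2, 0⟩)) : CWVert m p s t)))
      ((Finset.univ.filter fun j => t j = 0).image fun j =>
        (Sum.inr (Sum.inl j) : CWVert m p s t)) := by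
    rw [Finset.disjoint_left]
    rintro x hx hy
    simp only [Finset.mem_union, Finset.mem_image, Finset.mem_univ, true_and,
      Finset.mem_filter] at hx hy
    obtain ⟨z, _, hz⟩ := hy
    rcases hx with ⟨y, rfl⟩ | ⟨y, rfl⟩ <;> simp at hz
  rw [W, Finset.card_union_of_disjoint d2, Finset.card_union_of_disjoint d1,
    Finset.card_image_of_injective _ hinj1, Finset.card_image_of_injective _ hinj2,
    Finset.card_image_of_injective _ hinj3]
  simp

end CWAux

/-- the independence number of a Cameron–Walker graph in standard form
equals `(s₁+⋯+sₘ) + (t₁+⋯+t_p) + #{j : t_j = 0}`. -/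
theorem stmt_12 (m p : ℕ) (hm : 1 ≤ m) (hp : 1 ≤ p) (E : Fin m → Fin p → Prop)
    (s : Fin m → ℕ) (t : Fin p → ℕ) (hs : ∀ i, 1 ≤ s i)
    (hconn : (CWBip m p E).Connected) :
    IsGreatest {k : ℕ | ∃ A : Finset (CWVert m p s t),
        (CWGraph m p E s t).IsIndepFinset A ∧ A.card = k}
      ((∑ i, s i) + (∑ j, t j) + (Finset.univ.filter (fun j : Fin p => t j = 0)).card) := by
  constructor
  · exact ⟨CWAux.W m p s t, CWAux.W_indep, CWAux.W_card⟩
  · rintro k ⟨A, hA, rfl⟩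
    exact CWAux.upper A hA hs
end

section
/- Let G be a Cameron–Walker graph in standard form and define, for a subset V ⊆ {v_1,...,v_m}, f(V) = Σ_{v_i ∈ V} s_i + m − |V| + Σ_{j : N_bip(w_j) ⊄ V} t_j + #{j : N_bip(w_j) ⊆ V}. Then i(G) = min over all V ⊆ {v_1,...,v_m} of f(V), where i(G) is the minimum cardinality of an independent set A of G with A ∪ N_G(A) = V(G). -/
/-!
For `V ⊆ {v₁,…,vₘ}`, the vertices `vᵢ ∉ V`, all leaves at the `vᵢ ∈ V`, the `w_j` with
`N_bip(w_j) ⊆ V` and one vertex from each triangle at every other `w_j` form an independent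
dominating set of size `f(V)`. Conversely, for an independent dominating set `A` put
`V = {vᵢ ∉ A}`: every leaf at a `vᵢ ∈ V` is dominated only by itself, a `w_j` with
`N_bip(w_j) ⊆ V` is dominated by itself or by a triangle vertex, and a `w_j` with a neighbour
in `A` is not in `A`, so each of its `t_j` triangles meets `A`. Hence `|A| ≥ f(V)`.
-/

open Finset

namespace CWGraph

variable {m p : ℕ} {E : Fin m → Fin p → Prop} {s : Fin m → ℕ} {t : Fin p → ℕ}

abbrev v (i : Fin m) : CWVert m p s t := .inl i
abbrev w (j : Fin p) : CWVert m p s t := .inr (.inl j)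
abbrev leaf (i : Fin m) (k : Fin (s i)) : CWVert m p s t := .inr (.inr (.inl ⟨i, k⟩))
abbrev tri (j : Fin p) (l : Fin (t j)) (b : Fin 2) : CWVert m p s t :=
  .inr (.inr (.inr ⟨j, l, b⟩))

theorem adj_v_iff {u : CWVert m p s t} {i : Fin m} :
    (CWGraph m p E s t).Adj u (v i) ↔ (∃ j, E i j ∧ u = w j) ∨ ∃ k, u = leaf i k := by
  rcases u with i' | j' | ⟨i', k'⟩ | ⟨j', l', b'⟩ <;> simp [CWGraph, eq_comm]
  rintro rfl; simp

theorem adj_w_iff {u : CWVert m p s t} {j : Fin p} :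
    (CWGraph m p E s t).Adj u (w j) ↔ (∃ i, E i j ∧ u = v i) ∨ ∃ l b, u = tri j l b := by
  rcases u with i' | j' | ⟨i', k'⟩ | ⟨j', l', b'⟩ <;> simp [CWGraph, eq_comm]
  rintro rfl; fin_cases b' <;> simp

theorem adj_leaf_iff {u : CWVert m p s t} {i : Fin m} {k : Fin (s i)} :
    (CWGraph m p E s t).Adj u (leaf i k) ↔ u = v i := by
  rcases u with i' | j' | ⟨i', k'⟩ | ⟨j', l', b'⟩ <;> simp [CWGraph, eq_comm]

theorem adj_tri_iff {u : CWVert m p s t} {j : Fin p} {l : Fin (t j)} {b : Fin 2} :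
    (CWGraph m p E s t).Adj u (tri j l b) ↔ u = w j ∨ ∃ b', b' ≠ b ∧ u = tri j l b' := by
  rcases u with i' | j' | ⟨i', k'⟩ | ⟨j', l', b'⟩ <;> simp [CWGraph, eq_comm]
  obtain rfl | hj := eq_or_ne j j'
  · fin_cases b <;> fin_cases b' <;> simp [eq_comm]
  · simp [hj]

open Classical in
/-- The `j` with `N_bip(w_j) ⊆ V`. -/
noncomputable def coveredBy (E : Fin m → Fin p → Prop) (V : Finset (Fin m)) : Finset (Fin p) :=
  univ.filter fun j => ∀ i, E i j → i ∈ V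

theorem mem_coveredBy {V : Finset (Fin m)} {j : Fin p} :
    j ∈ coveredBy E V ↔ ∀ i, E i j → i ∈ V := by
  simp [coveredBy]

/-- The paper's `f(V)`. -/
noncomputable def cost (E : Fin m → Fin p → Prop) (s : Fin m → ℕ) (t : Fin p → ℕ)
    (V : Finset (Fin m)) : ℕ :=
  (∑ i ∈ V, s i) + (m - #V) + (∑ j ∈ (coveredBy E V)ᶜ, t j) + #(coveredBy E V)

open Classical in
theorem cost_eq_sum_add (V : Finset (Fin m)) :
    cost E s t V = (∑ i ∈ V, s i) + (m - #V)
      + (∑ j ∈ univ.filter (fun j => ¬ ∀ i, E i j → i ∈ V), t j)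
      + #(univ.filter fun j => ∀ i, E i j → i ∈ V) := by
  rw [cost, coveredBy, compl_filter]

noncomputable def indepDomFinsetOf (E : Fin m → Fin p → Prop) (s : Fin m → ℕ)
    (t : Fin p → ℕ) (V : Finset (Fin m)) : Finset (CWVert m p s t) :=
  Vᶜ.disjSum <| (coveredBy E V).disjSum <|
    (V.sigma fun _ => univ).disjSum ((coveredBy E V)ᶜ.sigma fun _ => univ ×ˢ {0})

section indepDomFinsetOf

variable {V : Finset (Fin m)}

@[simp] theorem v_mem_indepDomFinsetOf {i : Fin m} :
    v i ∈ indepDomFinsetOf E s t V ↔ i ∉ V := by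
  simp [indepDomFinsetOf]

@[simp] theorem w_mem_indepDomFinsetOf {j : Fin p} :
    w j ∈ indepDomFinsetOf E s t V ↔ j ∈ coveredBy E V := by
  simp [indepDomFinsetOf]

@[simp] theorem leaf_mem_indepDomFinsetOf {i : Fin m} {k : Fin (s i)} :
    leaf i k ∈ indepDomFinsetOf E s t V ↔ i ∈ V := by
  simp [indepDomFinsetOf]

@[simp] theorem tri_mem_indepDomFinsetOf {j : Fin p} {l : Fin (t j)} {b : Fin 2} :
    tri j l b ∈ indepDomFinsetOf E s t V ↔ j ∉ coveredBy E V ∧ b = 0 := by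
  simp [indepDomFinsetOf, eq_comm]

theorem isIndepFinset_indepDomFinsetOf :
    (CWGraph m p E s t).IsIndepFinset (indepDomFinsetOf E s t V) := by
  intro u hu x hx hadj
  rcases x with i | j | ⟨i, k⟩ | ⟨j, l, b⟩
  · rcases adj_v_iff.1 hadj with ⟨j, hij, rfl⟩ | ⟨k, rfl⟩ <;> simp_all [mem_coveredBy]
  · rcases adj_w_iff.1 hadj with ⟨i, hij, rfl⟩ | ⟨l, b, rfl⟩ <;> simp_all [mem_coveredBy]
  · obtain rfl := adj_leaf_iff.1 hadj; simp_all
  · rcases adj_tri_iff.1 hadj with rfl | ⟨b', hb', rfl⟩ <;> simp_all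

theorem isIndepDomFinset_indepDomFinsetOf (hs : ∀ i, 1 ≤ s i) :
    (CWGraph m p E s t).IsIndepDomFinset (indepDomFinsetOf E s t V) := by
  refine ⟨isIndepFinset_indepDomFinsetOf, fun x => ?_⟩
  rcases x with i | j | ⟨i, k⟩ | ⟨j, l, b⟩
  · by_cases hi : i ∈ V
    · exact .inr ⟨leaf i ⟨0, hs i⟩, by simpa, adj_v_iff.2 (.inr ⟨_, rfl⟩)⟩
    · exact .inl (by simpa)
  · by_cases hj : j ∈ coveredBy E V
    · exact .inl (by simpa)
    · obtain ⟨i, hij, hi⟩ : ∃ i, E i j ∧ i ∉ V := by simpa [mem_coveredBy] using hj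
      exact .inr ⟨v i, by simpa, adj_w_iff.2 (.inl ⟨i, hij, rfl⟩)⟩
  · by_cases hi : i ∈ V
    · exact .inl (by simpa)
    · exact .inr ⟨v i, by simpa, adj_leaf_iff.2 rfl⟩
  · by_cases hj : j ∈ coveredBy E V
    · exact .inr ⟨w j, by simpa, adj_tri_iff.2 (.inl rfl)⟩
    · obtain rfl | hb := eq_or_ne b 0
      · exact .inl (by simpa)
      · exact .inr ⟨tri j l 0, by simpa, adj_tri_iff.2 (.inr ⟨0, hb.symm, rfl⟩)⟩

theorem card_indepDomFinsetOf : #(indepDomFinsetOf E s t V) = cost E s t V := by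
  simp only [indepDomFinsetOf, cost, card_disjSum, card_compl, Fintype.card_fin, card_sigma,
    card_univ, card_product, card_singleton, mul_one]
  ring

end indepDomFinsetOf

section lowerBound

variable {A : Finset (CWVert m p s t)}

theorem leaf_mem_of_v_notMem (hA : (CWGraph m p E s t).IsIndepDomFinset A) {i : Fin m}
    (hi : v i ∉ A) (k : Fin (s i)) : leaf i k ∈ A := by
  rcases hA.2 (leaf i k) with h | ⟨u, hu, hadj⟩
  · exact h
  · rw [adj_leaf_iff.1 hadj] at hu
    exact absurd hu hi

theorem w_mem_or_tri_mem (hA : (CWGraph m p E s t).IsIndepDomFinset A) {j : Fin p}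
    (hj : ∀ i, E i j → v i ∉ A) : w j ∈ A ∨ ∃ l b, tri j l b ∈ A := by
  rcases hA.2 (w j) with h | ⟨u, hu, hadj⟩
  · exact .inl h
  · rcases adj_w_iff.1 hadj with ⟨i, hij, rfl⟩ | ⟨l, b, rfl⟩
    · exact absurd hu (hj i hij)
    · exact .inr ⟨l, b, hu⟩

theorem exists_tri_mem (hA : (CWGraph m p E s t).IsIndepDomFinset A) {i : Fin m} {j : Fin p}
    (hi : v i ∈ A) (hij : E i j) (l : Fin (t j)) : ∃ b, tri j l b ∈ A := by
  have hw : w j ∉ A := fun hw => hA.1 _ hi _ hw (adj_w_iff.2 (.inl ⟨i, hij, rfl⟩))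
  rcases hA.2 (tri j l 0) with h | ⟨u, hu, hadj⟩
  · exact ⟨0, h⟩
  · rcases adj_tri_iff.1 hadj with rfl | ⟨b, -, rfl⟩
    · exact absurd hu hw
    · exact ⟨b, hu⟩

noncomputable def triIn (A : Finset (CWVert m p s t)) (j : Fin p) : Finset (Fin (t j) × Fin 2) :=
  univ.filter fun x => tri j x.1 x.2 ∈ A

theorem card_toRight_toLeft_add_card_toRight_toRight_toRight (A : Finset (CWVert m p s t)) :
    #A.toRight.toLeft + #A.toRight.toRight.toRight
      = ∑ j, ((if w j ∈ A then 1 else 0) + #(triIn A j)) := by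
  have hW : A.toRight.toLeft = univ.filter fun j => w j ∈ A := by ext; simp
  have hT : A.toRight.toRight.toRight = univ.sigma (triIn A) := by ext ⟨j, l, b⟩; simp [triIn]
  rw [sum_add_distrib, hW, hT, card_filter, card_sigma]

theorem card_coveredBy_add_sum_le (hA : (CWGraph m p E s t).IsIndepDomFinset A) :
    #(coveredBy E A.toLeftᶜ) + ∑ j ∈ (coveredBy E A.toLeftᶜ)ᶜ, t j
      ≤ #A.toRight.toLeft + #A.toRight.toRight.toRight := by
  set C := coveredBy E A.toLeftᶜ
  have covered : ∀ j ∈ C, 1 ≤ (if w j ∈ A then 1 else 0) + #(triIn A j) := by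
    intro j hj
    rcases w_mem_or_tri_mem hA (by simpa [C, mem_coveredBy] using hj) with hw | ⟨l, b, hlb⟩
    · simp [hw]
    · exact le_add_left (card_pos.2 ⟨(l, b), by simpa [triIn]⟩)
  have uncovered : ∀ j ∈ Cᶜ, t j ≤ (if w j ∈ A then 1 else 0) + #(triIn A j) := by
    intro j hj
    obtain ⟨i, hij, hi⟩ : ∃ i, E i j ∧ v i ∈ A := by simpa [C, mem_coveredBy] using hj
    choose b hb using exists_tri_mem hA hi hij
    calc t j = #(univ.image fun l => (l, b l)) := by
          rw [card_image_of_injective _ fun l l' h => (Prod.ext_iff.1 h).1, card_univ,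
            Fintype.card_fin]
      _ ≤ #(triIn A j) := card_le_card fun x hx => by
          obtain ⟨l, -, rfl⟩ := mem_image.1 hx
          simpa [triIn] using hb l
      _ ≤ _ := le_add_left le_rfl
  calc #C + ∑ j ∈ Cᶜ, t j
      ≤ ∑ j ∈ C, ((if w j ∈ A then 1 else 0) + #(triIn A j))
        + ∑ j ∈ Cᶜ, ((if w j ∈ A then 1 else 0) + #(triIn A j)) := by
        rw [card_eq_sum_ones]
        exact add_le_add (sum_le_sum covered) (sum_le_sum uncovered)
    _ = _ := by rw [sum_add_sum_compl, card_toRight_toLeft_add_card_toRight_toRight_toRight]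

theorem sum_le_card_toRight_toRight_toLeft (hA : (CWGraph m p E s t).IsIndepDomFinset A) :
    ∑ i ∈ A.toLeftᶜ, s i ≤ #A.toRight.toRight.toLeft :=
  calc ∑ i ∈ A.toLeftᶜ, s i = #(A.toLeftᶜ.sigma fun _ => univ) := by simp [card_sigma]
    _ ≤ _ := card_le_card fun ⟨i, k⟩ hik => by
      simpa using leaf_mem_of_v_notMem hA (by simpa using hik) k

theorem cost_le_card (hA : (CWGraph m p E s t).IsIndepDomFinset A) :
    cost E s t A.toLeftᶜ ≤ #A := by
  have hv : m - #A.toLeftᶜ = #A.toLeft := by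
    rw [card_compl, Fintype.card_fin,
      Nat.sub_sub_self (card_le_univ A.toLeft |>.trans_eq (Fintype.card_fin m))]
  have hleaves := sum_le_card_toRight_toRight_toLeft hA
  have htri := card_coveredBy_add_sum_le hA
  rw [← card_toLeft_add_card_toRight (u := A), ← card_toLeft_add_card_toRight (u := A.toRight),
    ← card_toLeft_add_card_toRight (u := A.toRight.toRight)]
  unfold cost
  omega

end lowerBound

end CWGraph

open Classical in
theorem stmt_13_general (m p : ℕ) (E : Fin m → Fin p → Prop)
    (s : Fin m → ℕ) (t : Fin p → ℕ) (hs : ∀ i, 1 ≤ s i) :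
    sInf {k : ℕ | ∃ A : Finset (CWVert m p s t),
        (CWGraph m p E s t).IsIndepDomFinset A ∧ A.card = k}
      = sInf (Set.range (fun V : Finset (Fin m) =>
          (∑ i ∈ V, s i) + (m - V.card)
          + (∑ j ∈ Finset.univ.filter (fun j : Fin p => ¬ ∀ i, E i j → i ∈ V), t j)
          + (Finset.univ.filter (fun j : Fin p => ∀ i, E i j → i ∈ V)).card)) := by
  simp only [← CWGraph.cost_eq_sum_add]
  apply csInf_eq_csInf_of_forall_exists_le
  · rintro _ ⟨A, hA, rfl⟩
    exact ⟨_, ⟨A.toLeftᶜ, rfl⟩, CWGraph.cost_le_card hA⟩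
  · rintro _ ⟨V, rfl⟩
    exact ⟨_, ⟨_, CWGraph.isIndepDomFinset_indepDomFinsetOf hs, rfl⟩,
      CWGraph.card_indepDomFinsetOf.le⟩

open Classical in
/-- `i(G)`, the least size of an independent dominating set of a
Cameron–Walker graph `G` in standard form, equals the minimum over all
`V ⊆ {v₁,…,vₘ}` of
`f(V) = Σ_{vᵢ∈V} sᵢ + m − |V| + Σ_{j : N_bip(w_j) ⊄ V} t_j + #{j : N_bip(w_j) ⊆ V}`. -/
theorem stmt_13 (m p : ℕ) (hm : 1 ≤ m) (hp : 1 ≤ p) (E : Fin m → Fin p → Prop)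
    (s : Fin m → ℕ) (t : Fin p → ℕ) (hs : ∀ i, 1 ≤ s i)
    (hconn : (CWBip m p E).Connected) :
    sInf {k : ℕ | ∃ A : Finset (CWVert m p s t),
        (CWGraph m p E s t).IsIndepDomFinset A ∧ A.card = k}
      = sInf (Set.range (fun V : Finset (Fin m) =>
          (∑ i ∈ V, s i) + (m - V.card)
          + (∑ j ∈ Finset.univ.filter (fun j : Fin p => ¬ ∀ i, E i j → i ∈ V), t j)
          + (Finset.univ.filter (fun j : Fin p => ∀ i, E i j → i ∈ V)).card)) :=
  stmt_13_general m p E s t hs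
end

section
/- Let G be a Cameron–Walker graph in standard form. Then every independent dominating set (independent set A with A ∪ N_G(A) = V(G)) has size at least m + #{j : t_j > 0}. -/
/-!
Group the vertices into blocks: `vᵢ` with its leaves, and `w_j` with its triangles. A leaf or
triangle vertex has all its neighbours in its own block, so a dominating set meets the block of
every `vᵢ` (which has a leaf since `sᵢ ≥ 1`) and of every `w_j` with `t_j > 0`. Hence the block
map sends the dominating set onto at least `m + #{j : t_j > 0}` blocks.
-/

namespace CWVert

variable {m p : ℕ} {s : Fin m → ℕ} {t : Fin p → ℕ}

def block : CWVert m p s t → Fin m ⊕ Fin p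
  | Sum.inl i => Sum.inl i
  | Sum.inr (Sum.inl j) => Sum.inr j
  | Sum.inr (Sum.inr (Sum.inl ⟨i, _⟩)) => Sum.inl i
  | Sum.inr (Sum.inr (Sum.inr ⟨j, _⟩)) => Sum.inr j

lemma block_eq_of_adj_pendant {E : Fin m → Fin p → Prop} {u : CWVert m p s t}
    {y : (Σ i : Fin m, Fin (s i)) ⊕ (Σ j : Fin p, Fin (t j) × Fin 2)}
    (h : (CWGraph m p E s t).Adj u (Sum.inr (Sum.inr y))) :
    block u = block (Sum.inr (Sum.inr y) : CWVert m p s t) := by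
  rw [CWGraph, SimpleGraph.fromRel_adj] at h
  rcases u with i | j | ⟨i, k⟩ | ⟨j, l, c⟩ <;> rcases y with ⟨i', k'⟩ | ⟨j', l', c'⟩ <;>
    simp only [block] at h ⊢ <;> grind

lemma block_mem_image_of_dominating {E : Fin m → Fin p → Prop} {A : Finset (CWVert m p s t)}
    (hdom : ∀ v, v ∈ A ∨ ∃ u ∈ A, (CWGraph m p E s t).Adj u v)
    (y : (Σ i : Fin m, Fin (s i)) ⊕ (Σ j : Fin p, Fin (t j) × Fin 2)) :
    block (Sum.inr (Sum.inr y) : CWVert m p s t) ∈ A.image block := by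
  rcases hdom (Sum.inr (Sum.inr y)) with hy | ⟨u, hu, hadj⟩
  · exact Finset.mem_image_of_mem _ hy
  · exact block_eq_of_adj_pendant hadj ▸ Finset.mem_image_of_mem _ hu

end CWVert

theorem stmt_14_general (m p : ℕ) (E : Fin m → Fin p → Prop)
    (s : Fin m → ℕ) (t : Fin p → ℕ) (hs : ∀ i, 1 ≤ s i)
    (A : Finset (CWVert m p s t)) (hA : (CWGraph m p E s t).IsIndepDomFinset A) :
    m + (Finset.univ.filter (fun j : Fin p => 0 < t j)).card ≤ A.card := by
  have hsurj : Set.SurjOn CWVert.block (A : Set (CWVert m p s t))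
      ↑((Finset.univ.disjSum (Finset.univ.filter (fun j : Fin p => 0 < t j)) :
        Finset (Fin m ⊕ Fin p))) := by
    rintro (i | j) hk
    · exact Finset.mem_image.mp
        (CWVert.block_mem_image_of_dominating hA.2 (Sum.inl ⟨i, ⟨0, hs i⟩⟩))
    · have ht : 0 < t j := by simpa using hk
      exact Finset.mem_image.mp
        (CWVert.block_mem_image_of_dominating hA.2 (Sum.inr ⟨j, ⟨0, ht⟩, 0⟩))
  simpa [Finset.card_disjSum] using Finset.card_le_card_of_surjOn _ hsurj

/-- every independent dominating set of a Cameron–Walker graph in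
standard form has size at least `m + #{j : t_j > 0}`. -/
theorem stmt_14 (m p : ℕ) (hm : 1 ≤ m) (hp : 1 ≤ p) (E : Fin m → Fin p → Prop)
    (s : Fin m → ℕ) (t : Fin p → ℕ) (hs : ∀ i, 1 ≤ s i)
    (hconn : (CWBip m p E).Connected)
    (A : Finset (CWVert m p s t)) (hA : (CWGraph m p E s t).IsIndepDomFinset A) :
    m + (Finset.univ.filter (fun j : Fin p => 0 < t j)).card ≤ A.card :=
  stmt_14_general m p E s t hs A hA
end

section
/- Let G be a Cameron–Walker graph in standard form. Then the minimum size i(G) of an independent dominating set of G satisfies i(G) ≤ min{ p + Σ_{i=1}^m s_i, m + Σ_{j=1}^p t_j }. -/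
/-- for a Cameron–Walker graph `G` in standard form, the minimum size
`i(G)` of an independent dominating set satisfies
`i(G) ≤ min{ p + Σ sᵢ, m + Σ t_j }`. -/
theorem stmt_15 (m p : ℕ) (hm : 1 ≤ m) (hp : 1 ≤ p) (E : Fin m → Fin p → Prop)
    (s : Fin m → ℕ) (t : Fin p → ℕ) (hs : ∀ i, 1 ≤ s i)
    (hconn : (CWBip m p E).Connected) :
    ∃ A : Finset (CWVert m p s t), (CWGraph m p E s t).IsIndepDomFinset A ∧
      A.card ≤ min (p + ∑ i, s i) (m + ∑ j, t j) := by
  have hE : ∀ j : Fin p, ∃ i, E i j := by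
    intro j
    obtain ⟨w⟩ := hconn.preconnected (Sum.inr j) (Sum.inl ⟨0, hm⟩)
    cases w with
    | cons h w' =>
      rename_i b
      rw [CWBip, SimpleGraph.fromRel_adj] at h
      cases b with
      | inl i => exact ⟨i, h.2.elim (fun h => h.elim) id⟩
      | inr j' => exact (h.2.elim (fun h => h.elim) (fun h => h.elim))
  rcases le_total (p + ∑ i, s i) (m + ∑ j, t j) with hle | hle
  · -- A₁ : all w_j together with all leaves
    refine ⟨(Finset.univ.image fun j : Fin p => (Sum.inr (Sum.inl j) : CWVert m p s t)) ∪
      (Finset.univ.image fun x : Σ i : Fin m, Fin (s i) =>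
        (Sum.inr (Sum.inr (Sum.inl x)) : CWVert m p s t)), ⟨?_, ?_⟩, ?_⟩
    · intro u hu v hv
      simp only [Finset.mem_union, Finset.mem_image, Finset.mem_univ, true_and] at hu hv
      rcases hu with ⟨j, rfl⟩ | ⟨⟨i, k⟩, rfl⟩ <;> rcases hv with ⟨j', rfl⟩ | ⟨⟨i', k'⟩, rfl⟩ <;>
        · intro hadj
          rw [CWGraph, SimpleGraph.fromRel_adj] at hadj
          exact hadj.2.elim id id
    · intro v
      match v with
      | Sum.inl i =>
        refine Or.inr ⟨Sum.inr (Sum.inr (Sum.inl ⟨i, ⟨0, hs i⟩⟩)), ?_, ?_⟩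
        · simp
        · rw [CWGraph, SimpleGraph.fromRel_adj]
          exact ⟨by simp, Or.inr rfl⟩
      | Sum.inr (Sum.inl j) => exact Or.inl (by simp)
      | Sum.inr (Sum.inr (Sum.inl x)) => exact Or.inl (by simp)
      | Sum.inr (Sum.inr (Sum.inr ⟨j, l, e⟩)) =>
        refine Or.inr ⟨Sum.inr (Sum.inl j), by simp, ?_⟩
        rw [CWGraph, SimpleGraph.fromRel_adj]
        exact ⟨by simp, Or.inl rfl⟩
    · refine le_trans (Finset.card_union_le _ _) ?_
      refine le_min ?_ ?_
      · gcongr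
        · exact le_trans (Finset.card_image_le) (by simp)
        · exact le_trans (Finset.card_image_le) (by simp)
      · refine le_trans ?_ hle
        gcongr
        · exact le_trans (Finset.card_image_le) (by simp)
        · exact le_trans (Finset.card_image_le) (by simp)
  · -- A₂ : all v_i together with one vertex of each triangle
    refine ⟨(Finset.univ.image fun i : Fin m => (Sum.inl i : CWVert m p s t)) ∪
      (Finset.univ.image fun x : Σ j : Fin p, Fin (t j) =>
        (Sum.inr (Sum.inr (Sum.inr ⟨x.1, x.2, 0⟩)) : CWVert m p s t)), ⟨?_, ?_⟩, ?_⟩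
    · intro u hu v hv
      simp only [Finset.mem_union, Finset.mem_image, Finset.mem_univ, true_and] at hu hv
      rcases hu with ⟨i, rfl⟩ | ⟨⟨j, l⟩, rfl⟩ <;> rcases hv with ⟨i', rfl⟩ | ⟨⟨j', l'⟩, rfl⟩ <;>
        · intro hadj
          rw [CWGraph, SimpleGraph.fromRel_adj] at hadj
          first
          | exact hadj.2.elim id id
          | · obtain ⟨hne, hor⟩ := hadj
              rcases hor with ⟨rfl, hl⟩ | ⟨rfl, hl⟩ <;>
                exact hne (by rw [eq_of_heq hl])
    · intro v
      match v with
      | Sum.inl i => exact Or.inl (by simp)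
      | Sum.inr (Sum.inl j) =>
        obtain ⟨i, hij⟩ := hE j
        refine Or.inr ⟨Sum.inl i, by simp, ?_⟩
        rw [CWGraph, SimpleGraph.fromRel_adj]
        exact ⟨by simp, Or.inl hij⟩
      | Sum.inr (Sum.inr (Sum.inl ⟨i, k⟩)) =>
        refine Or.inr ⟨Sum.inl i, by simp, ?_⟩
        rw [CWGraph, SimpleGraph.fromRel_adj]
        exact ⟨by simp, Or.inl rfl⟩
      | Sum.inr (Sum.inr (Sum.inr ⟨j, l, e⟩)) =>
        match e with
        | 0 =>
          refine Or.inl ?_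
          simp only [Finset.mem_union, Finset.mem_image, Finset.mem_univ, true_and]
          exact Or.inr ⟨⟨j, l⟩, rfl⟩
        | 1 =>
          refine Or.inr ⟨Sum.inr (Sum.inr (Sum.inr ⟨j, l, 0⟩)), ?_, ?_⟩
          · simp only [Finset.mem_union, Finset.mem_image, Finset.mem_univ, true_and]
            exact Or.inr ⟨⟨j, l⟩, rfl⟩
          · rw [CWGraph, SimpleGraph.fromRel_adj]
            refine ⟨by simp, Or.inl ⟨rfl, HEq.rfl⟩⟩
    · refine le_trans (Finset.card_union_le _ _) ?_
      refine le_min ?_ ?_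
      · refine le_trans ?_ hle
        gcongr
        · exact le_trans (Finset.card_image_le) (by simp)
        · exact le_trans (Finset.card_image_le) (by simp)
      · gcongr
        · exact le_trans (Finset.card_image_le) (by simp)
        · exact le_trans (Finset.card_image_le) (by simp)
end

section
/- Let G be a Cameron–Walker graph in standard form whose bipartite part is the complete bipartite graph K_{m,p}. Then i(G) = min{ p + Σ_{i=1}^m s_i, m + Σ_{j=1}^p t_j }, where i(G) is the minimum size of an independent dominating set of G. -/
section CW16
open Finset
variable {m p : ℕ} {s : Fin m → ℕ} {t : Fin p → ℕ}

abbrev vv (i : Fin m) : CWVert m p s t := Sum.inl i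
abbrev ww (j : Fin p) : CWVert m p s t := Sum.inr (Sum.inl j)
abbrev lf (i : Fin m) (a : Fin (s i)) : CWVert m p s t := Sum.inr (Sum.inr (Sum.inl ⟨i, a⟩))
abbrev tr (j : Fin p) (l : Fin (t j)) (c : Fin 2) : CWVert m p s t :=
  Sum.inr (Sum.inr (Sum.inr ⟨j, (l, c)⟩))

local notation "G" => CWGraph m p (fun _ _ => True) s t

lemma adj_vw (i : Fin m) (j : Fin p) : (G).Adj (vv i) (ww j) := by
  simp [CWGraph, SimpleGraph.fromRel_adj]

lemma adj_vl (i : Fin m) (a : Fin (s i)) : (G).Adj (vv i) (lf i a) := by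
  simp [CWGraph, SimpleGraph.fromRel_adj]

lemma adj_wt (j : Fin p) (l : Fin (t j)) (c : Fin 2) : (G).Adj (ww j) (tr j l c) := by
  simp [CWGraph, SimpleGraph.fromRel_adj]

lemma adj_tt (j : Fin p) (l : Fin (t j)) : (G).Adj (tr j l 0) (tr j l 1) := by
  simp [CWGraph, SimpleGraph.fromRel_adj]

-- non-adjacency lemmas
lemma nadj_ww (j j' : Fin p) : ¬ (G).Adj (ww (s := s) (t := t) j) (ww j') := by
  simp [CWGraph, SimpleGraph.fromRel_adj]

lemma nadj_wl (j : Fin p) (i : Fin m) (a : Fin (s i)) : ¬ (G).Adj (ww (t := t) j) (lf i a) := by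
  simp [CWGraph, SimpleGraph.fromRel_adj]

lemma nadj_ll (i : Fin m) (a : Fin (s i)) (i' : Fin m) (a' : Fin (s i')) :
    ¬ (G).Adj (lf (t := t) i a) (lf i' a') := by
  simp [CWGraph, SimpleGraph.fromRel_adj]

lemma nadj_vv (i i' : Fin m) : ¬ (G).Adj (vv (s := s) (t := t) i) (vv i') := by
  simp [CWGraph, SimpleGraph.fromRel_adj]

lemma nadj_vt (i : Fin m) (j : Fin p) (l : Fin (t j)) (c : Fin 2) :
    ¬ (G).Adj (vv (s := s) i) (tr j l c) := by
  simp [CWGraph, SimpleGraph.fromRel_adj]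

lemma nadj_tt0 (j j' : Fin p) (l : Fin (t j)) (l' : Fin (t j')) :
    ¬ (G).Adj (tr (s := s) j l 0) (tr j' l' 0) := by
  intro h
  rw [CWGraph, SimpleGraph.fromRel_adj] at h
  obtain ⟨hne, h⟩ := h
  rcases h with ⟨rfl, hl⟩ | ⟨rfl, hl⟩ <;> rw [heq_iff_eq] at hl <;> subst hl <;> exact hne rfl

-- neighbor characterizations
lemma leaf_nbr {u : CWVert m p s t} {i : Fin m} {a : Fin (s i)}
    (h : (G).Adj u (lf i a)) : u = vv i := by
  rcases u with i' | j' | ⟨i', a'⟩ | ⟨j', l', c'⟩ <;>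
    simp_all [CWGraph, SimpleGraph.fromRel_adj]

lemma tri_nbr {u : CWVert m p s t} {j : Fin p} {l : Fin (t j)} {c : Fin 2}
    (h : (G).Adj u (tr j l c)) : u = ww j ∨ ∃ c', u = tr j l c' := by
  rcases u with i' | j' | ⟨i', a'⟩ | ⟨j', l', c'⟩ <;>
    rw [CWGraph, SimpleGraph.fromRel_adj] at h <;> obtain ⟨hne, h⟩ := h
  · simp_all
  · left; rcases h with h | h <;> simp_all
  · simp_all
  · right
    rcases h with ⟨rfl, hl⟩ | ⟨rfl, hl⟩ <;> rw [heq_iff_eq] at hl <;> subst hl <;> exact ⟨c', rfl⟩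

lemma w_nbr {u : CWVert m p s t} {j : Fin p}
    (h : (G).Adj u (ww j)) : (∃ i, u = vv i) ∨ ∃ l c, u = tr j l c := by
  rcases u with i' | j' | ⟨i', a'⟩ | ⟨j', l', c'⟩ <;>
    rw [CWGraph, SimpleGraph.fromRel_adj] at h <;> obtain ⟨hne, h⟩ := h
  · exact Or.inl ⟨i', rfl⟩
  · simp_all
  · simp_all
  · right
    rcases h with h | ⟨rfl, -⟩
    · exact absurd h (by simp)
    · exact ⟨l', c', rfl⟩

lemma mem_or_adj {A : Finset (CWVert m p s t)} (hD : ∀ v, v ∈ A ∨ ∃ u ∈ A, (G).Adj u v)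
    (v : CWVert m p s t) : v ∈ A ∨ ∃ u ∈ A, (G).Adj u v := hD v

end CW16

/-- for a Cameron–Walker graph in standard form whose bipartite part
is the complete bipartite graph `K_{m,p}`, the minimum size of an independent
dominating set is exactly `min{ p + Σ sᵢ, m + Σ t_j }`. -/
theorem stmt_16 (m p : ℕ) (hm : 1 ≤ m) (hp : 1 ≤ p)
    (s : Fin m → ℕ) (t : Fin p → ℕ) (hs : ∀ i, 1 ≤ s i) :
    IsLeast {k : ℕ | ∃ A : Finset (CWVert m p s t),
        (CWGraph m p (fun _ _ => True) s t).IsIndepDomFinset A ∧ A.card = k}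
      (min (p + ∑ i, s i) (m + ∑ j, t j)) := by
  classical
  set G := CWGraph m p (fun _ _ => True) s t with hG
  constructor
  · -- membership
    rcases le_total (p + ∑ i, s i) (m + ∑ j, t j) with h | h
    · rw [min_eq_left h]
      refine ⟨(Finset.univ.image fun j : Fin p => (ww j : CWVert m p s t)) ∪
        (Finset.univ.image fun x : Σ i : Fin m, Fin (s i) => (lf x.1 x.2 : CWVert m p s t)),
        ⟨?_, ?_⟩, ?_⟩
      · intro u hu v hv
        simp only [Finset.mem_union, Finset.mem_image, Finset.mem_univ, true_and] at hu hv
        rcases hu with ⟨j, rfl⟩ | ⟨x, rfl⟩ <;> rcases hv with ⟨j', rfl⟩ | ⟨x', rfl⟩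
        · exact nadj_ww j j'
        · exact nadj_wl j x'.1 x'.2
        · exact fun h => nadj_wl j' x.1 x.2 h.symm
        · exact nadj_ll x.1 x.2 x'.1 x'.2
      · intro v
        rcases v with i | j | ⟨i, a⟩ | ⟨j, l, c⟩
        · refine Or.inr ⟨ww ⟨0, hp⟩, ?_, (adj_vw i ⟨0, hp⟩).symm⟩
          simp
        · left; simp [Finset.mem_union]
        · left
          refine Finset.mem_union_right _ ?_
          exact Finset.mem_image.2 ⟨⟨i, a⟩, Finset.mem_univ _, rfl⟩
        · refine Or.inr ⟨ww j, ?_, adj_wt j l c⟩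
          simp
      · rw [Finset.card_union_of_disjoint, Finset.card_image_of_injective,
          Finset.card_image_of_injective]
        · simp [Fintype.card_sigma]
        · intro x y hxy; simpa using hxy
        · intro x y hxy; simpa using hxy
        · simp only [Finset.disjoint_left, Finset.mem_image, Finset.mem_univ, true_and,
            forall_exists_index]
          rintro u j rfl ⟨x, hx⟩
          simp at hx
    · rw [min_eq_right h]
      refine ⟨(Finset.univ.image fun i : Fin m => (vv i : CWVert m p s t)) ∪
        (Finset.univ.image fun x : Σ j : Fin p, Fin (t j) => (tr x.1 x.2 0 : CWVert m p s t)),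
        ⟨?_, ?_⟩, ?_⟩
      · intro u hu v hv
        simp only [Finset.mem_union, Finset.mem_image, Finset.mem_univ, true_and] at hu hv
        rcases hu with ⟨i, rfl⟩ | ⟨x, rfl⟩ <;> rcases hv with ⟨i', rfl⟩ | ⟨x', rfl⟩
        · exact nadj_vv i i'
        · exact nadj_vt i x'.1 x'.2 0
        · exact fun h => nadj_vt i' x.1 x.2 0 h.symm
        · exact nadj_tt0 x.1 x'.1 x.2 x'.2
      · intro v
        rcases v with i | j | ⟨i, a⟩ | ⟨j, l, c⟩
        · left; simp
        · refine Or.inr ⟨vv ⟨0, hm⟩, by simp, adj_vw ⟨0, hm⟩ j⟩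
        · refine Or.inr ⟨vv i, by simp, adj_vl i a⟩
        · by_cases hc : c = 0
          · subst hc
            left
            refine Finset.mem_union_right _ ?_
            exact Finset.mem_image.2 ⟨⟨j, l⟩, Finset.mem_univ _, rfl⟩
          · have hc1 : c = 1 := by omega
            subst hc1
            refine Or.inr ⟨tr j l 0, ?_, adj_tt j l⟩
            refine Finset.mem_union_right _ ?_
            exact Finset.mem_image.2 ⟨⟨j, l⟩, Finset.mem_univ _, rfl⟩
      · rw [Finset.card_union_of_disjoint, Finset.card_image_of_injective,
          Finset.card_image_of_injective]
        · simp [Fintype.card_sigma]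
        · rintro ⟨j, l⟩ ⟨j', l'⟩ hxy
          simp only [Sum.inr.injEq, Sigma.mk.inj_iff] at hxy
          obtain ⟨rfl, h2⟩ := hxy
          rw [heq_iff_eq, Prod.mk.injEq] at h2
          obtain ⟨rfl, -⟩ := h2
          rfl
        · intro x y hxy; simpa using hxy
        · simp only [Finset.disjoint_left, Finset.mem_image, Finset.mem_univ, true_and,
            forall_exists_index]
          rintro u i rfl ⟨x, hx⟩
          simp at hx
  · -- lower bound
    rintro k ⟨A, ⟨hInd, hDom⟩, rfl⟩
    by_cases hv : ∃ i0, (vv i0 : CWVert m p s t) ∈ A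
    · obtain ⟨i0, hi0⟩ := hv
      refine le_trans (min_le_right _ _) ?_
      have pick : ∀ x : Fin m ⊕ (Σ j : Fin p, Fin (t j)), ∃ u, u ∈ A ∧
          (match x with
           | Sum.inl i => u = vv i ∨ ∃ a, u = lf i a
           | Sum.inr ⟨j, l⟩ => ∃ c, u = tr j l c) := by
        rintro (i | ⟨j, l⟩)
        · by_cases hvi : (vv i : CWVert m p s t) ∈ A
          · exact ⟨vv i, hvi, Or.inl rfl⟩
          · rcases hDom (lf i ⟨0, hs i⟩) with hin | ⟨u, hu, hadj⟩
            · exact ⟨_, hin, Or.inr ⟨_, rfl⟩⟩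
            · exact absurd (leaf_nbr hadj ▸ hu) hvi
        · rcases hDom (tr j l 0) with hin | ⟨u, hu, hadj⟩
          · exact ⟨_, hin, 0, rfl⟩
          · rcases tri_nbr hadj with rfl | ⟨c, rfl⟩
            · exact absurd (adj_vw i0 j) (hInd _ hi0 _ hu)
            · exact ⟨_, hu, c, rfl⟩
      choose f hfA hform using pick
      have hcard : (Finset.univ : Finset (Fin m ⊕ Σ j : Fin p, Fin (t j))).card ≤ A.card := by
        apply Finset.card_le_card_of_injOn f (fun x _ => hfA x)
        rintro (i | ⟨j, l⟩) - (i' | ⟨j', l'⟩) - hxy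
        · have h1 := hform (Sum.inl i); have h2 := hform (Sum.inl i')
          simp only at h1 h2
          rcases h1 with h1 | ⟨a, h1⟩ <;> rcases h2 with h2 | ⟨a', h2⟩ <;>
              rw [h1, h2] at hxy
          · rw [Sum.inl.injEq] at hxy; rw [hxy]
          · exact absurd hxy (by simp)
          · exact absurd hxy (by simp)
          · simp only [Sum.inr.injEq, Sum.inl.injEq, Sigma.mk.inj_iff] at hxy
            obtain ⟨rfl, -⟩ := hxy
            rfl
        · have h1 := hform (Sum.inl i); have h2 := hform (Sum.inr ⟨j', l'⟩)
          simp only at h1 h2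
          obtain ⟨c', h2⟩ := h2
          rcases h1 with h1 | ⟨a, h1⟩ <;> rw [h1, h2] at hxy <;> exact absurd hxy (by simp)
        · have h1 := hform (Sum.inr ⟨j, l⟩); have h2 := hform (Sum.inl i')
          simp only at h1 h2
          obtain ⟨c, h1⟩ := h1
          rcases h2 with h2 | ⟨a', h2⟩ <;> rw [h1, h2] at hxy <;> exact absurd hxy (by simp)
        · have h1 := hform (Sum.inr ⟨j, l⟩); have h2 := hform (Sum.inr ⟨j', l'⟩)
          simp only at h1 h2
          obtain ⟨c, h1⟩ := h1; obtain ⟨c', h2⟩ := h2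
          rw [h1, h2] at hxy
          simp only [Sum.inr.injEq, Sigma.mk.inj_iff] at hxy
          obtain ⟨rfl, h3⟩ := hxy
          rw [heq_iff_eq, Prod.mk.injEq] at h3
          obtain ⟨rfl, -⟩ := h3
          rfl
      calc m + ∑ j, t j = (Finset.univ : Finset (Fin m ⊕ Σ j : Fin p, Fin (t j))).card := by
              simp [Fintype.card_sigma]
        _ ≤ A.card := hcard
    · push_neg at hv
      refine le_trans (min_le_left _ _) ?_
      have pick : ∀ x : Fin p ⊕ (Σ i : Fin m, Fin (s i)), ∃ u, u ∈ A ∧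
          (match x with
           | Sum.inl j => u = ww j ∨ ∃ l c, u = tr j l c
           | Sum.inr ⟨i, a⟩ => u = lf i a) := by
        rintro (j | ⟨i, a⟩)
        · rcases hDom (ww j) with hin | ⟨u, hu, hadj⟩
          · exact ⟨_, hin, Or.inl rfl⟩
          · rcases w_nbr hadj with ⟨i, rfl⟩ | ⟨l, c, rfl⟩
            · exact absurd hu (hv i)
            · exact ⟨_, hu, Or.inr ⟨l, c, rfl⟩⟩
        · rcases hDom (lf i a) with hin | ⟨u, hu, hadj⟩
          · exact ⟨_, hin, rfl⟩
          · exact absurd (leaf_nbr hadj ▸ hu) (hv i)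
      choose f hfA hform using pick
      have hcard : (Finset.univ : Finset (Fin p ⊕ Σ i : Fin m, Fin (s i))).card ≤ A.card := by
        apply Finset.card_le_card_of_injOn f (fun x _ => hfA x)
        rintro (j | ⟨i, a⟩) - (j' | ⟨i', a'⟩) - hxy
        · have h1 := hform (Sum.inl j); have h2 := hform (Sum.inl j')
          simp only at h1 h2
          rcases h1 with h1 | ⟨l, c, h1⟩ <;> rcases h2 with h2 | ⟨l', c', h2⟩ <;>
              rw [h1, h2] at hxy
          · simp only [Sum.inr.injEq, Sum.inl.injEq] at hxy; rw [hxy]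
          · exact absurd hxy (by simp)
          · exact absurd hxy (by simp)
          · simp only [Sum.inr.injEq, Sigma.mk.inj_iff] at hxy
            obtain ⟨rfl, -⟩ := hxy
            rfl
        · have h1 := hform (Sum.inl j); have h2 := hform (Sum.inr ⟨i', a'⟩)
          simp only at h1 h2
          rcases h1 with h1 | ⟨l, c, h1⟩ <;> rw [h1, h2] at hxy <;> exact absurd hxy (by simp)
        · have h1 := hform (Sum.inr ⟨i, a⟩); have h2 := hform (Sum.inl j')
          simp only at h1 h2
          rcases h2 with h2 | ⟨l', c', h2⟩ <;> rw [h1, h2] at hxy <;> exact absurd hxy (by simp)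
        · have h1 := hform (Sum.inr ⟨i, a⟩); have h2 := hform (Sum.inr ⟨i', a'⟩)
          simp only at h1 h2
          rw [h1, h2] at hxy
          simp only [Sum.inr.injEq, Sum.inl.injEq, Sigma.mk.inj_iff] at hxy
          obtain ⟨rfl, h3⟩ := hxy
          rw [heq_iff_eq] at h3
          subst h3
          rfl
      calc p + ∑ i, s i = (Finset.univ : Finset (Fin p ⊕ Σ i : Fin m, Fin (s i))).card := by
              simp [Fintype.card_sigma]
        _ ≤ A.card := hcard
end

section
/- Let G be a Cameron–Walker graph in standard form, with n = |V(G)|, α(G) the independence number, i(G) the minimum size of an independent dominating set, and reg := m + Σ_j t_j. Then n < i(G) + 2α(G). (Combinatorial form of |V(G)| < depth + 2·dim.) -/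
/-!
Write `S = ∑ sᵢ`, `T = ∑ t_j` and `z` for the number of `w_j` carrying no triangle, so that
`n = m + p + S + 2T`. All leaves, one vertex of each pendant triangle and the `w_j` without
triangles form an independent set, so `α(G) ≥ S + T + z`. A dominating set meets the closed
neighbourhood of a leaf at each `vᵢ` and of a triangle vertex at each `w_j` with `t_j > 0`;
these neighbourhoods are pairwise disjoint, so `i(G) ≥ m + (p - z)`. Hence
`i(G) + 2α(G) ≥ n + S + z > n`, because `S ≥ m ≥ 1`.
-/

namespace SimpleGraph

variable {V : Type*} (G : SimpleGraph V)

theorem exists_isIndepDomFinset [Finite V] : ∃ A : Finset V, G.IsIndepDomFinset A := by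
  classical
  have := Fintype.ofFinite V
  obtain ⟨A, hA, hmax⟩ := (Finset.univ.powerset.filter G.IsIndepFinset).exists_maximal
    ⟨∅, by simp [IsIndepFinset]⟩
  simp only [Finset.mem_filter, Finset.mem_powerset, Finset.subset_univ, true_and] at hA hmax
  refine ⟨A, hA, fun v => or_iff_not_imp_right.mpr fun hv => ?_⟩
  simp only [not_exists, not_and] at hv
  have hins : G.IsIndepFinset (insert v A) := by
    simp only [IsIndepFinset, Finset.mem_insert, forall_eq_or_imp]
    exact ⟨⟨G.loopless.irrefl v, fun u hu huv => hv u hu huv.symm⟩,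
      fun u hu => ⟨hv u hu, hA u hu⟩⟩
  by_contra hvA
  exact hvA (hmax hins (Finset.subset_insert v A) (Finset.mem_insert_self v A))

theorem card_le_card_of_dominating {A : Finset V} (hA : ∀ v, v ∈ A ∨ ∃ u ∈ A, G.Adj u v)
    {ι : Type*} [Fintype ι] (x : ι → V)
    (hx : ∀ a b u, (u = x a ∨ G.Adj u (x a)) → (u = x b ∨ G.Adj u (x b)) → a = b) :
    Fintype.card ι ≤ A.card := by
  classical
  have hmeet : ∀ a, ∃ u ∈ A, u = x a ∨ G.Adj u (x a) := fun a =>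
    (hA (x a)).elim (fun h => ⟨x a, h, Or.inl rfl⟩) fun ⟨u, hu, huv⟩ => ⟨u, hu, Or.inr huv⟩
  choose u huA hux using hmeet
  have hinj : Function.Injective u := fun a b hab => hx a b (u a) (hux a) (hab ▸ hux b)
  calc Fintype.card ι = (Finset.univ.image u).card := by
        rw [Finset.card_image_of_injective _ hinj, Finset.card_univ]
    _ ≤ A.card := Finset.card_le_card fun _ hv => by
        obtain ⟨a, -, rfl⟩ := Finset.mem_image.mp hv
        exact huA a

theorem le_sInf_card_indepDom [Finite V] {k : ℕ}
    (h : ∀ A : Finset V, G.IsIndepDomFinset A → k ≤ A.card) :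
    k ≤ sInf {k : ℕ | ∃ A : Finset V, G.IsIndepDomFinset A ∧ A.card = k} := by
  obtain ⟨A, hA⟩ := G.exists_isIndepDomFinset
  exact le_csInf ⟨A.card, A, hA, rfl⟩ (by rintro _ ⟨A, hA, rfl⟩; exact h A hA)

theorem card_le_sSup_card_indep [Fintype V] {B : Finset V} (hB : G.IsIndepFinset B) :
    B.card ≤ sSup {k : ℕ | ∃ A : Finset V, G.IsIndepFinset A ∧ A.card = k} :=
  le_csSup ⟨Fintype.card V, by rintro _ ⟨A, -, rfl⟩; exact A.card_le_univ⟩ ⟨B, hB, rfl⟩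

end SimpleGraph

namespace CWVert

variable {m p : ℕ} {s : Fin m → ℕ} {t : Fin p → ℕ}

abbrev w (j : Fin p) : CWVert m p s t := Sum.inr (Sum.inl j)
abbrev leaf (i : Fin m) (k : Fin (s i)) : CWVert m p s t := Sum.inr (Sum.inr (Sum.inl ⟨i, k⟩))
abbrev tri (j : Fin p) (l : Fin (t j)) (e : Fin 2) : CWVert m p s t :=
  Sum.inr (Sum.inr (Sum.inr ⟨j, (l, e)⟩))

def anchor : CWVert m p s t → Fin m ⊕ Fin p
  | Sum.inl i => Sum.inl i
  | Sum.inr (Sum.inl j) => Sum.inr j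
  | Sum.inr (Sum.inr (Sum.inl ⟨i, _⟩)) => Sum.inl i
  | Sum.inr (Sum.inr (Sum.inr ⟨j, _⟩)) => Sum.inr j

theorem card_eq : Fintype.card (CWVert m p s t) = m + p + ∑ i, s i + 2 * ∑ j, t j := by
  simp only [Fintype.card_sum, Fintype.card_fin, Fintype.card_sigma, Fintype.card_prod,
    Finset.mul_sum]
  ring_nf

end CWVert

namespace CWGraph

open CWVert

variable {m p : ℕ} {E : Fin m → Fin p → Prop} {s : Fin m → ℕ} {t : Fin p → ℕ}

theorem anchor_eq_of_adj_leaf {u : CWVert m p s t} {i : Fin m} {k : Fin (s i)}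
    (h : (CWGraph m p E s t).Adj u (leaf i k)) : anchor u = Sum.inl i := by
  rcases u with i' | j' | ⟨i', k'⟩ | ⟨j', l', e'⟩ <;> simp_all [CWGraph, anchor]

theorem anchor_eq_of_adj_tri {u : CWVert m p s t} {j : Fin p} {l : Fin (t j)} {e : Fin 2}
    (h : (CWGraph m p E s t).Adj u (tri j l e)) : anchor u = Sum.inr j := by
  rcases u with i' | j' | ⟨i', k'⟩ | ⟨j', l', e'⟩ <;> simp_all [CWGraph, anchor]
  exact h.2.elim And.left fun h => h.1.symm

theorem le_card_of_dominating (hs : ∀ i, 1 ≤ s i) {A : Finset (CWVert m p s t)}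
    (hA : ∀ v, v ∈ A ∨ ∃ u ∈ A, (CWGraph m p E s t).Adj u v) :
    m + (Finset.univ.filter fun j => 0 < t j).card ≤ A.card := by
  let x : Fin m ⊕ {j : Fin p // 0 < t j} → CWVert m p s t :=
    Sum.elim (fun i => leaf i ⟨0, hs i⟩) fun j => tri j.1 ⟨0, j.2⟩ 0
  let g : Fin m ⊕ {j : Fin p // 0 < t j} → Fin m ⊕ Fin p := Sum.map id Subtype.val
  have hg : Function.Injective g :=
    Sum.map_injective.mpr ⟨Function.injective_id, Subtype.val_injective⟩
  have hanchor : ∀ a u, (u = x a ∨ (CWGraph m p E s t).Adj u (x a)) → anchor u = g a := by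
    rintro (i | j) u (rfl | h)
    exacts [rfl, anchor_eq_of_adj_leaf h, rfl, anchor_eq_of_adj_tri h]
  have := (CWGraph m p E s t).card_le_card_of_dominating hA x
    fun a b u ha hb => hg ((hanchor a u ha).symm.trans (hanchor b u hb))
  simpa [Fintype.card_subtype] using this

def indepVert : (Σ i, Fin (s i)) ⊕ (Σ j, Fin (t j)) ⊕ {j : Fin p // t j = 0} → CWVert m p s t :=
  Sum.elim (fun x => leaf x.1 x.2) (Sum.elim (fun x => tri x.1 x.2 0) (fun j => w j.1))

theorem indepVert_injective : Function.Injective (indepVert (s := s) (t := t)) := by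
  rintro (⟨i, k⟩ | ⟨j, l⟩ | ⟨j, hj⟩) (⟨i', k'⟩ | ⟨j', l'⟩ | ⟨j', hj'⟩) h <;>
    simp_all [indepVert]
  obtain ⟨rfl, h⟩ := h
  simp_all

theorem not_adj_indepVert (a b : (Σ i, Fin (s i)) ⊕ (Σ j, Fin (t j)) ⊕ {j : Fin p // t j = 0}) :
    ¬ (CWGraph m p E s t).Adj (indepVert a) (indepVert b) := by
  rcases a with ⟨i, k⟩ | ⟨j, l⟩ | ⟨j, hj⟩ <;> rcases b with ⟨i', k'⟩ | ⟨j', l'⟩ | ⟨j', hj'⟩ <;>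
    simp_all [indepVert, CWGraph]
  · intro h
    constructor <;> rintro rfl hl <;> simp_all
  · rintro rfl
    have := l.isLt
    omega
  · rintro rfl
    have := l'.isLt
    omega

theorem exists_isIndepFinset_card :
    ∃ B : Finset (CWVert m p s t), (CWGraph m p E s t).IsIndepFinset B ∧
      B.card = ∑ i, s i + ∑ j, t j + (Finset.univ.filter fun j => t j = 0).card := by
  refine ⟨Finset.univ.map ⟨indepVert, indepVert_injective⟩, ?_, ?_⟩
  · simp only [SimpleGraph.IsIndepFinset, Finset.mem_map, Finset.mem_univ, true_and]
    rintro _ ⟨a, rfl⟩ _ ⟨b, rfl⟩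
    exact not_adj_indepVert a b
  · simp [Fintype.card_sigma, Fintype.card_subtype, add_assoc]

end CWGraph

theorem stmt_17_general (m p : ℕ) (hm : 1 ≤ m) (E : Fin m → Fin p → Prop)
    (s : Fin m → ℕ) (t : Fin p → ℕ) (hs : ∀ i, 1 ≤ s i) :
    Fintype.card (CWVert m p s t) <
      sInf {k : ℕ | ∃ A : Finset (CWVert m p s t),
          (CWGraph m p E s t).IsIndepDomFinset A ∧ A.card = k}
      + 2 * sSup {k : ℕ | ∃ A : Finset (CWVert m p s t),
          (CWGraph m p E s t).IsIndepFinset A ∧ A.card = k} := by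
  have hi := (CWGraph m p E s t).le_sInf_card_indepDom fun _ hA =>
    CWGraph.le_card_of_dominating hs hA.2
  obtain ⟨B, hB, hBcard⟩ := CWGraph.exists_isIndepFinset_card (E := E) (s := s) (t := t)
  have hα := (CWGraph m p E s t).card_le_sSup_card_indep hB
  have hsplit := Finset.card_filter_add_card_filter_not (s := Finset.univ) fun j : Fin p => 0 < t j
  have hmS : m ≤ ∑ i, s i := by
    simpa using Finset.sum_le_sum fun i (_ : i ∈ Finset.univ) => hs i
  simp only [Finset.card_univ, Fintype.card_fin, not_lt, Nat.le_zero] at hsplit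
  rw [CWVert.card_eq]
  omega

/-- for a Cameron–Walker graph `G` in standard form on `n` vertices,
`n < i(G) + 2α(G)`, where `i(G)` is the least size of an independent dominating set
and `α(G)` is the independence number. -/
theorem stmt_17 (m p : ℕ) (hm : 1 ≤ m) (hp : 1 ≤ p) (E : Fin m → Fin p → Prop)
    (s : Fin m → ℕ) (t : Fin p → ℕ) (hs : ∀ i, 1 ≤ s i)
    (hconn : (CWBip m p E).Connected) :
    Fintype.card (CWVert m p s t) <
      sInf {k : ℕ | ∃ A : Finset (CWVert m p s t),
          (CWGraph m p E s t).IsIndepDomFinset A ∧ A.card = k}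
      + 2 * sSup {k : ℕ | ∃ A : Finset (CWVert m p s t),
          (CWGraph m p E s t).IsIndepFinset A ∧ A.card = k} :=
  stmt_17_general m p hm E s t hs
end
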